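/- arXiv:math/0404505 — 3 statements merged into one kernel-verified Lean document; each statement's English description precedes it below -/
import Mathlib

section
/- For the function ψ(x,t) = e^{-λ|t|}·E[exp(-√(2λ)·|x + B(|t|)|)] with B a standard Brownian motion, the equal-time value is ψ(x,0) = exp(-√(2λ)·|x|) and the autocorrelation is ψ(0,t) = 1 - (1/√π)·∫_{-√(λ|t|)}^{√(λ|t|)} e^{-v²} dv. -/
open MeasureTheory ProbabilityTheory Filter Set Real
open scoped NNReal ENNReal

/-- `B` is a standard one-dimensional Brownian motion started at `0`,
with unit diffusion constant, on the probability space `Ω`. -/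
def IsStandardBM {Ω : Type*} [MeasureSpace Ω] (B : ℝ → Ω → ℝ) : Prop :=
  (∀ t, Measurable (B t)) ∧
  (∀ᵐ ω ∂(ℙ : Measure Ω), B 0 ω = 0 ∧ Continuous fun t => B t ω) ∧
  (∀ s t : ℝ, 0 ≤ s → s ≤ t →
    Measure.map (fun ω => B t ω - B s ω) ℙ = gaussianReal 0 (Real.toNNReal (t - s))) ∧
  (∀ n : ℕ, ∀ t : ℕ → ℝ, Monotone t → 0 ≤ t 0 →
    iIndepFun
      (fun (i : Fin n) ω => B (t (i.1 + 1)) ω - B (t i.1) ω) ℙ)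

/-- Two processes are independent (as path-valued random variables). -/
def IndepProcesses {Ω : Type*} [MeasureSpace Ω] (B₁ B₂ : ℝ → Ω → ℝ) : Prop :=
  IndepFun (fun ω t => B₁ t ω) (fun ω t => B₂ t ω) (ℙ : Measure Ω)

lemma aux_shift (f : ℝ → ℝ) (d : ℝ) :
    ∫ x in Ioi (0:ℝ), f (x + d) = ∫ x in Ioi d, f x := by
  have e : MeasurableEmbedding (fun x : ℝ => x + d) :=
    (Homeomorph.addRight d).measurableEmbedding
  have h1 : ∫ x in Ioi d, f x ∂(Measure.map (fun x : ℝ => x + d) volume)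
      = ∫ x in (fun x : ℝ => x + d) ⁻¹' Ioi d, f (x + d) := e.setIntegral_map f (Ioi d)
  rw [map_add_right_eq_self volume d] at h1
  rw [show (fun x : ℝ => x + d) ⁻¹' Ioi d = Ioi 0 by ext x; simp] at h1
  exact h1.symm

lemma aux_gauss_int (g : ℝ → ℝ) {v : ℝ≥0} (hv : v ≠ 0) :
    ∫ z, g z ∂(gaussianReal 0 v) = ∫ z, gaussianPDFReal 0 v z * g z := by
  rw [gaussianReal_of_var_ne_zero _ hv]
  rw [show gaussianPDF 0 v = fun x => ((Real.toNNReal (gaussianPDFReal 0 v x)) : ℝ≥0∞) from rfl]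
  rw [integral_withDensity_eq_integral_smul
    ((measurable_gaussianPDFReal 0 v).real_toNNReal) g]
  congr 1; ext z
  simp [NNReal.smul_def, Real.coe_toNNReal _ (gaussianPDFReal_nonneg 0 v z)]

lemma aux_main {lam t : ℝ} (hlam : 0 < lam) (ht : 0 < t) :
    Real.exp (-lam * t) *
      ∫ z, Real.exp (-Real.sqrt (2*lam) * |z|) ∂(gaussianReal 0 t.toNNReal)
    = 1 - (1 / Real.sqrt π) *
        ∫ v in (-Real.sqrt (lam*t))..(Real.sqrt (lam*t)), Real.exp (-v^2) := by
  set c : ℝ := Real.sqrt (2*lam) with hc_def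
  set a : ℝ := Real.sqrt (lam*t) with ha_def
  have hc : 0 < c := Real.sqrt_pos.mpr (by linarith)
  have hcsq : c^2 = 2*lam := Real.sq_sqrt (by linarith)
  have ha : 0 ≤ a := Real.sqrt_nonneg _
  have hv : t.toNNReal ≠ 0 := by
    simp only [ne_eq, Real.toNNReal_eq_zero, not_le]; exact ht
  have hvt : ((t.toNNReal : ℝ≥0) : ℝ) = t := Real.coe_toNNReal t ht.le
  have h2t : (0:ℝ) < 2*t := by linarith
  set st : ℝ := Real.sqrt (2*t) with hst_def
  have hst : 0 < st := Real.sqrt_pos.mpr h2t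
  set J : ℝ := ∫ v in (0:ℝ)..a, Real.exp (-v^2) with hJ_def
  set g : ℝ → ℝ := fun w => Real.exp (-(2*t)⁻¹ * w^2) with hg_def
  have hgInt : Integrable g := integrable_exp_neg_mul_sq (by positivity)
  -- step A: integral against density
  rw [aux_gauss_int _ hv]
  -- step B: as a function of |z|
  have hB : (fun z => gaussianPDFReal 0 t.toNNReal z * Real.exp (-c * |z|))
      = fun z => ((Real.sqrt (2*π*t))⁻¹ * (Real.exp (-(2*t)⁻¹ * |z|^2) * Real.exp (-c * |z|))) := by
    ext z
    rw [gaussianPDFReal]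
    rw [hvt, sub_zero, sq_abs, mul_assoc]
    congr 2
    field_simp
  rw [hB]
  rw [integral_comp_abs (f := fun u => (Real.sqrt (2*π*t))⁻¹ * (Real.exp (-(2*t)⁻¹ * u^2) * Real.exp (-c * u)))]
  -- step C: complete the square
  have hC : ∀ u : ℝ, Real.exp (-lam*t) * ((Real.sqrt (2*π*t))⁻¹ * (Real.exp (-(2*t)⁻¹ * u^2) * Real.exp (-c * u)))
      = (Real.sqrt (2*π*t))⁻¹ * g (u + c*t) := by
    intro u
    rw [hg_def]
    rw [← Real.exp_add, mul_left_comm, ← Real.exp_add]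
    congr 2
    have hlam' : lam = c^2/2 := by rw [hcsq]; ring
    rw [hlam']
    field_simp
    ring
  rw [mul_left_comm, ← MeasureTheory.integral_const_mul]
  simp only [hC]
  rw [MeasureTheory.integral_const_mul]
  rw [aux_shift g (c*t)]
  -- split the half-line integral
  have hsplit : (∫ w in Ioc (0:ℝ) (c*t), g w) + ∫ w in Ioi (c*t), g w = ∫ w in Ioi (0:ℝ), g w := by
    rw [← setIntegral_union (Ioc_disjoint_Ioi le_rfl) measurableSet_Ioi
      hgInt.integrableOn hgInt.integrableOn]
    rw [Ioc_union_Ioi_eq_Ioi (by positivity)]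
  have hIoi0 : ∫ w in Ioi (0:ℝ), g w = Real.sqrt π * st / 2 := by
    rw [hg_def]
    have := integral_gaussian_Ioi (2*t)⁻¹
    rw [this, show π / (2*t)⁻¹ = π * (2*t) by field_simp, Real.sqrt_mul pi_pos.le, ← hst_def]
  have hIoc : ∫ w in Ioc (0:ℝ) (c*t), g w = st * J := by
    rw [← intervalIntegral.integral_of_le (by positivity)]
    have hsub := intervalIntegral.integral_comp_mul_left (a := (0:ℝ)) (b := a) (c := st)
      (f := g) hst.ne'
    have hsta : st * a = c * t := by
      rw [hst_def, ha_def, ← Real.sqrt_mul h2t.le, show (2*t)*(lam*t) = (2*lam)*t^2 by ring,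
        Real.sqrt_mul (by linarith), Real.sqrt_sq ht.le, hc_def]
    rw [mul_zero, hsta] at hsub
    have hgst : ∀ x : ℝ, g (st * x) = Real.exp (-x^2) := by
      intro x
      rw [hg_def]
      simp only
      rw [mul_pow, Real.sq_sqrt h2t.le]
      congr 1
      field_simp
    simp only [hgst] at hsub
    rw [hJ_def, hsub, smul_eq_mul, ← mul_assoc, mul_inv_cancel₀ hst.ne', one_mul]
  -- symmetrize RHS
  have hsym : (∫ v in (-a)..a, Real.exp (-v^2)) = 2 * J := by
    have cont : Continuous fun v : ℝ => Real.exp (-v^2) := by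
      exact Real.continuous_exp.comp (by continuity)
    have h1 : (∫ v in (-a)..(0:ℝ), Real.exp (-v^2)) = J := by
      have hneg := intervalIntegral.integral_comp_neg (a := (0:ℝ)) (b := a)
        (f := fun v => Real.exp (-v^2))
      simp only [neg_sq, neg_zero] at hneg
      rw [hJ_def, ← hneg]
    rw [← intervalIntegral.integral_add_adjacent_intervals (a := -a) (b := 0) (c := a)
      (cont.intervalIntegrable (-a) 0) (cont.intervalIntegrable 0 a), h1, hJ_def]
    ring
  rw [hsym]
  have hIoiCt : ∫ w in Ioi (c*t), g w = Real.sqrt π * st / 2 - st * J := by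
    rw [← hIoi0, ← hsplit, hIoc]; ring
  rw [hIoiCt]
  have hsqrt2pit : Real.sqrt (2*π*t) = Real.sqrt π * st := by
    rw [hst_def, ← Real.sqrt_mul pi_pos.le, show π * (2*t) = 2*π*t by ring]
  rw [hsqrt2pit]
  have hπ : (0:ℝ) < Real.sqrt π := Real.sqrt_pos.mpr pi_pos
  field_simp

/-- For `ψ(x,t) = e^{-λ|t|} E[exp (-√(2λ) |x + B(|t|)|)]`, one has
`ψ(x,0) = exp (-√(2λ)|x|)` and
`ψ(0,t) = 1 - (1/√π) ∫_{-√(λ|t|)}^{√(λ|t|)} e^{-v²} dv`. -/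
theorem two_point_function_formulas
    {Ω : Type*} [MeasureSpace Ω] [IsProbabilityMeasure (ℙ : Measure Ω)]
    (B : ℝ → Ω → ℝ) (hB : IsStandardBM B)
    (lam : ℝ) (hlam : 0 < lam)
    (ψ : ℝ → ℝ → ℝ)
    (hψ : ∀ x t : ℝ, ψ x t =
      Real.exp (-lam * |t|) * ∫ ω, Real.exp (-Real.sqrt (2 * lam) * |x + B |t| ω|)) :
    (∀ x : ℝ, ψ x 0 = Real.exp (-Real.sqrt (2 * lam) * |x|)) ∧
    (∀ t : ℝ, ψ 0 t =
      1 - (1 / Real.sqrt Real.pi) *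
        ∫ v in (-Real.sqrt (lam * |t|))..(Real.sqrt (lam * |t|)), Real.exp (-v ^ 2)) := by
  obtain ⟨hmeas, hae, hincr, -⟩ := hB
  have hB0 : ∀ᵐ ω ∂(ℙ : Measure Ω), B 0 ω = 0 := hae.mono fun ω h => h.1
  constructor
  · intro x
    rw [hψ x 0]
    simp only [abs_zero, mul_zero, Real.exp_zero, one_mul]
    have : (∫ ω, Real.exp (-Real.sqrt (2*lam) * |x + B 0 ω|))
        = ∫ _ω : Ω, Real.exp (-Real.sqrt (2*lam) * |x|) ∂(ℙ : Measure Ω) := by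
      refine integral_congr_ae (hB0.mono fun ω h => ?_)
      simp [h]
    rw [this, integral_const, probReal_univ, one_smul]
  · intro t
    rw [hψ 0 t]
    simp only [zero_add]
    rcases eq_or_lt_of_le (abs_nonneg t) with h0 | hpos
    · rw [← h0]
      simp only [mul_zero, Real.exp_zero, one_mul, Real.sqrt_zero, neg_zero,
        intervalIntegral.integral_same, mul_zero, sub_zero]
      have : (∫ ω, Real.exp (-Real.sqrt (2*lam) * |B 0 ω|))
          = ∫ _ω : Ω, (1:ℝ) ∂(ℙ : Measure Ω) := by
        refine integral_congr_ae (hB0.mono fun ω h => ?_)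
        simp [h]
      rw [this, integral_const, probReal_univ, one_smul]
    · -- positive time
      have hmap : Measure.map (B |t|) (ℙ : Measure Ω) = gaussianReal 0 (Real.toNNReal |t|) := by
        have h1 := hincr 0 |t| le_rfl (abs_nonneg t)
        rw [sub_zero] at h1
        rw [← h1]
        refine Measure.map_congr (hB0.mono fun ω h => ?_)
        simp [h]
      have hint : (∫ ω, Real.exp (-Real.sqrt (2*lam) * |B |t| ω|))
          = ∫ z, Real.exp (-Real.sqrt (2*lam) * |z|) ∂(gaussianReal 0 (Real.toNNReal |t|)) := by
        rw [← hmap]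
        rw [integral_map (hmeas |t|).aemeasurable]
        exact (Real.continuous_exp.comp (by continuity)).aestronglyMeasurable
      rw [hint]
      exact aux_main hlam hpos
end

section
/- Three independent Brownian motions started at three distinct points, run as coalescing Brownian motions, almost surely do not all coalesce at the same time (i.e., the event that the first two coalesce at the same time the last two coalesce has probability zero). -/
open MeasureTheory ProbabilityTheory Filter Set
open scoped Topology

namespace TripleCoalesceAux

/-- The difference of the two shifted paths of a pair. -/
def dd (y1 y2 : ℝ) (q : (ℝ → ℝ) × (ℝ → ℝ)) (t : ℝ) : ℝ :=
  (y1 + q.1 t) - (y2 + q.2 t)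

lemma measurable_dd_eval (y1 y2 : ℝ) (t : ℝ) :
    Measurable fun q : (ℝ → ℝ) × (ℝ → ℝ) => dd y1 y2 q t := by
  unfold dd
  exact (measurable_const.add ((measurable_pi_apply t).comp measurable_fst)).sub
    (measurable_const.add ((measurable_pi_apply t).comp measurable_snd))

lemma continuous_dd {q : (ℝ → ℝ) × (ℝ → ℝ)} (h1 : Continuous q.1) (h2 : Continuous q.2)
    (y1 y2 : ℝ) : Continuous (dd y1 y2 q) :=
  (continuous_const.add h1).sub (continuous_const.add h2)

/-- Measurable rational approximation to the event that the pair paths meet in `[0, a]`. -/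
def ZZ (y1 y2 a : ℝ) : Set ((ℝ → ℝ) × (ℝ → ℝ)) :=
  {q | ∀ n : ℕ, ∃ r : ℚ, 0 ≤ (r : ℝ) ∧ (r : ℝ) ≤ a ∧ |dd y1 y2 q r| < 1 / (n + 1)}

lemma measurableSet_ZZ (y1 y2 a : ℝ) : MeasurableSet (ZZ y1 y2 a) := by
  have : ZZ y1 y2 a = ⋂ n : ℕ, ⋃ r : ℚ,
      ({q : (ℝ → ℝ) × (ℝ → ℝ) | 0 ≤ (r : ℝ)} ∩ ({q | (r : ℝ) ≤ a} ∩
        {q | |dd y1 y2 q r| < 1 / (n + 1)})) := by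
    ext q
    simp only [ZZ, mem_setOf_eq, mem_iInter, mem_iUnion, mem_inter_iff]
  rw [this]
  refine MeasurableSet.iInter fun n => MeasurableSet.iUnion fun r => ?_
  exact (MeasurableSet.const _).inter ((MeasurableSet.const _).inter
    (measurableSet_lt (measurable_dd_eval y1 y2 r).abs measurable_const))

lemma ZZ_mono {a b : ℝ} (h : a ≤ b) (y1 y2 : ℝ) : ZZ y1 y2 a ⊆ ZZ y1 y2 b := by
  intro q hq n
  obtain ⟨r, h0, h1, h2⟩ := hq n
  exact ⟨r, h0, h1.trans h, h2⟩

lemma mem_ZZ_iff {q : (ℝ → ℝ) × (ℝ → ℝ)} (h1 : Continuous q.1) (h2 : Continuous q.2)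
    {y1 y2 a : ℝ} (ha : 0 ≤ a) :
    q ∈ ZZ y1 y2 a ↔ ∃ t, 0 ≤ t ∧ t ≤ a ∧ dd y1 y2 q t = 0 := by
  have hd : Continuous (dd y1 y2 q) := continuous_dd h1 h2 y1 y2
  constructor
  · intro h
    choose r h0 hle habs using h
    have hmem : ∀ n, ((r n : ℝ)) ∈ Icc (0:ℝ) a := fun n => ⟨h0 n, hle n⟩
    obtain ⟨t, ht, φ, hφ, hlim⟩ := isCompact_Icc.tendsto_subseq hmem
    refine ⟨t, ht.1, ht.2, ?_⟩
    have h3 : Tendsto (fun n => dd y1 y2 q (r (φ n))) atTop (𝓝 (dd y1 y2 q t)) :=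
      (hd.tendsto t).comp hlim
    have h4 : Tendsto (fun n => dd y1 y2 q (r (φ n))) atTop (𝓝 0) := by
      apply squeeze_zero_norm (a := fun n : ℕ => 1 / (n + 1)) ?_ tendsto_one_div_add_atTop_nhds_zero_nat
      · intro n
        have hb : |dd y1 y2 q (r (φ n))| < 1 / (φ n + 1) := habs (φ n)
        have : (1 : ℝ) / (φ n + 1) ≤ 1 / (n + 1) := by
          apply one_div_le_one_div_of_le
          · positivity
          · have : n ≤ φ n := hφ.le_apply
            push_cast
            linarith [(Nat.cast_le (α := ℝ)).mpr this]
        exact (le_of_lt hb).trans this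
    exact tendsto_nhds_unique h3 h4
  · rintro ⟨t, ht0, hta, hdt⟩ n
    have hpos : (0:ℝ) < 1 / (n + 1) := by positivity
    rcases eq_or_lt_of_le ht0 with h | h
    · refine ⟨0, by norm_num, by simpa using ha, ?_⟩
      rw [show ((0:ℚ):ℝ) = t by rw [← h]; norm_num, hdt, abs_zero]
      exact hpos
    · obtain ⟨δ, hδ, hδ'⟩ := Metric.continuous_iff.mp hd t (1 / (n + 1)) hpos
      have hmin : 0 < min δ t := lt_min hδ h
      obtain ⟨r, hr1, hr2⟩ := exists_rat_btwn (show t - min δ t < t by linarith)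
      refine ⟨r, ?_, ?_, ?_⟩
      · have : t - min δ t ≥ 0 := by
          have := min_le_right δ t; linarith
        linarith
      · linarith
      · have hdist : dist (r : ℝ) t < δ := by
          rw [Real.dist_eq, abs_lt]
          constructor
          · have := min_le_left δ t; linarith
          · have := min_le_left δ t; linarith
        have := hδ' r hdist
        rwa [Real.dist_eq, hdt, sub_zero] at this

/-- The pair paths meet at some nonnegative time (measurable version). -/
def NES (y1 y2 : ℝ) : Set ((ℝ → ℝ) × (ℝ → ℝ)) := ⋃ n : ℕ, ZZ y1 y2 n

lemma measurableSet_NES (y1 y2 : ℝ) : MeasurableSet (NES y1 y2) :=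
  MeasurableSet.iUnion fun n => measurableSet_ZZ y1 y2 n

/-- Measurable version of the first meeting time of the pair. -/
noncomputable def TT (y1 y2 : ℝ) (q : (ℝ → ℝ) × (ℝ → ℝ)) : ℝ :=
  sInf {a : ℝ | 0 ≤ a ∧ q ∈ ZZ y1 y2 a}

lemma NES_empty_iff {y1 y2 : ℝ} {q : (ℝ → ℝ) × (ℝ → ℝ)} :
    q ∉ NES y1 y2 ↔ {a : ℝ | 0 ≤ a ∧ q ∈ ZZ y1 y2 a} = ∅ := by
  constructor
  · intro h
    ext a
    simp only [mem_setOf_eq, mem_empty_iff_false, iff_false, not_and]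
    intro ha hZ
    exact h (mem_iUnion.mpr ⟨⌈a⌉₊, ZZ_mono (Nat.le_ceil a) y1 y2 hZ⟩)
  · intro h hq
    obtain ⟨n, hs⟩ := mem_iUnion.mp hq
    have : (n:ℝ) ∈ {a : ℝ | 0 ≤ a ∧ q ∈ ZZ y1 y2 a} := ⟨Nat.cast_nonneg n, hs⟩
    rw [h] at this
    exact this

lemma measurable_TT (y1 y2 : ℝ) : Measurable (TT y1 y2) := by
  apply measurable_of_Iio
  intro c
  have hset : TT y1 y2 ⁻¹' Iio c =
      ((NES y1 y2)ᶜ ∩ {q | (0:ℝ) < c}) ∪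
        ⋃ r : ℚ, ({q : (ℝ → ℝ) × (ℝ → ℝ) | 0 ≤ (r:ℝ)} ∩ ({q | (r:ℝ) < c} ∩ ZZ y1 y2 r)) := by
    ext q
    simp only [mem_preimage, mem_Iio, mem_union, mem_inter_iff, mem_compl_iff, mem_iUnion,
      mem_setOf_eq]
    constructor
    · intro hlt
      by_cases hq : q ∈ NES y1 y2
      · right
        have hne : {a : ℝ | 0 ≤ a ∧ q ∈ ZZ y1 y2 a}.Nonempty := by
          by_contra hemp
          exact (NES_empty_iff.mpr (not_nonempty_iff_eq_empty.mp hemp)) hq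
        obtain ⟨a, ha, hac⟩ := exists_lt_of_csInf_lt hne hlt
        obtain ⟨r, hr1, hr2⟩ := exists_rat_btwn hac
        exact ⟨r, ha.1.trans hr1.le, hr2, ZZ_mono hr1.le y1 y2 ha.2⟩
      · left
        refine ⟨hq, ?_⟩
        have : TT y1 y2 q = 0 := by
          rw [TT, NES_empty_iff.mp hq, Real.sInf_empty]
        linarith [this ▸ hlt]
    · rintro (⟨hq, hc⟩ | ⟨r, hr0, hrc, hZ⟩)
      · have : TT y1 y2 q = 0 := by
          rw [TT, NES_empty_iff.mp hq, Real.sInf_empty]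
        rw [this]; exact hc
      · calc TT y1 y2 q ≤ (r:ℝ) :=
              csInf_le ⟨0, fun a ha => ha.1⟩ ⟨hr0, hZ⟩
          _ < c := hrc
  rw [hset]
  refine MeasurableSet.union (((measurableSet_NES y1 y2).compl).inter (MeasurableSet.const _))
    (MeasurableSet.iUnion fun r => (MeasurableSet.const _).inter
      ((MeasurableSet.const _).inter (measurableSet_ZZ y1 y2 r)))

/-- First meeting time characterization for continuous paths. -/
lemma TT_spec {q : (ℝ → ℝ) × (ℝ → ℝ)} (h1 : Continuous q.1) (h2 : Continuous q.2)
    {y1 y2 : ℝ} (hne : {t : ℝ | 0 ≤ t ∧ dd y1 y2 q t = 0}.Nonempty) :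
    sInf {t : ℝ | 0 ≤ t ∧ dd y1 y2 q t = 0} ∈ {t : ℝ | 0 ≤ t ∧ dd y1 y2 q t = 0} ∧
    q ∈ NES y1 y2 ∧ TT y1 y2 q = sInf {t : ℝ | 0 ≤ t ∧ dd y1 y2 q t = 0} := by
  set S := {t : ℝ | 0 ≤ t ∧ dd y1 y2 q t = 0} with hS
  have hd : Continuous (dd y1 y2 q) := continuous_dd h1 h2 y1 y2
  have hclosed : IsClosed S := by
    have : S = {t : ℝ | 0 ≤ t} ∩ (dd y1 y2 q) ⁻¹' {0} := rfl
    rw [this]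
    exact (isClosed_le continuous_const continuous_id).inter
      (isClosed_singleton.preimage hd)
  have hbdd : BddBelow S := ⟨0, fun t ht => ht.1⟩
  have hmem : sInf S ∈ S := hclosed.csInf_mem hne hbdd
  have hT0 : 0 ≤ sInf S := hmem.1
  have hSq : {a : ℝ | 0 ≤ a ∧ q ∈ ZZ y1 y2 a} = Ici (sInf S) := by
    ext a
    simp only [mem_setOf_eq, mem_Ici]
    constructor
    · rintro ⟨ha0, hZ⟩
      obtain ⟨t, ht0, hta, hdt⟩ := (mem_ZZ_iff h1 h2 ha0).mp hZ
      exact (csInf_le hbdd ⟨ht0, hdt⟩).trans hta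
    · intro haT
      exact ⟨hT0.trans haT, (mem_ZZ_iff h1 h2 (hT0.trans haT)).mpr
        ⟨sInf S, hT0, haT, hmem.2⟩⟩
  refine ⟨hmem, ?_, ?_⟩
  · exact mem_iUnion.mpr ⟨⌈sInf S⌉₊,
      (mem_ZZ_iff h1 h2 (Nat.cast_nonneg _)).mpr ⟨sInf S, hT0, Nat.le_ceil _, hmem.2⟩⟩
  · rw [TT, hSq, csInf_Ici]

/-- Dyadic rational approximation from above. -/
noncomputable def rapp (n : ℕ) (t : ℝ) : ℝ := (⌈t * 2 ^ n⌉ : ℤ) / 2 ^ n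

lemma rapp_ge (n : ℕ) (t : ℝ) : t ≤ rapp n t := by
  rw [rapp, le_div_iff₀ (by positivity)]
  exact Int.le_ceil _

lemma rapp_lt (n : ℕ) (t : ℝ) : rapp n t < t + ((2:ℝ) ^ n)⁻¹ := by
  rw [rapp, div_lt_iff₀ (by positivity)]
  calc ((⌈t * 2 ^ n⌉ : ℤ) : ℝ) < t * 2 ^ n + 1 := Int.ceil_lt_add_one _
    _ = (t + ((2:ℝ) ^ n)⁻¹) * 2 ^ n := by field_simp

lemma tendsto_rapp (t : ℝ) : Tendsto (fun n => rapp n t) atTop (𝓝 t) := by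
  have hupper : Tendsto (fun n : ℕ => t + ((2:ℝ) ^ n)⁻¹) atTop (𝓝 t) := by
    have h2 : Tendsto (fun n : ℕ => ((2:ℝ)⁻¹) ^ n) atTop (𝓝 0) :=
      tendsto_pow_atTop_nhds_zero_of_lt_one (by norm_num) (by norm_num)
    have : Tendsto (fun n : ℕ => ((2:ℝ) ^ n)⁻¹) atTop (𝓝 0) := by
      simpa [inv_pow] using h2
    simpa using tendsto_const_nhds.add this
  exact tendsto_of_tendsto_of_tendsto_of_le_of_le tendsto_const_nhds hupper
    (fun n => rapp_ge n t) (fun n => (rapp_lt n t).le)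

/-- Measurable version of the value of the first pair path at the first meeting time. -/
noncomputable def cL (y1 y2 : ℝ) (q : (ℝ → ℝ) × (ℝ → ℝ)) : ℝ :=
  limsup (fun n => q.1 (rapp n (TT y1 y2 q))) atTop

lemma measurable_cL (y1 y2 : ℝ) : Measurable (cL y1 y2) := by
  apply Measurable.limsup
  intro n
  have h1 : Measurable fun z : ((ℝ → ℝ) × (ℝ → ℝ)) × ℤ => z.1.1 ((z.2 : ℝ) / 2 ^ n) :=
    measurable_from_prod_countable_left fun m =>
      (measurable_pi_apply ((m : ℝ) / 2 ^ n)).comp measurable_fst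
  have h2 : Measurable fun q : (ℝ → ℝ) × (ℝ → ℝ) => (q, ⌈TT y1 y2 q * 2 ^ n⌉) :=
    measurable_id.prodMk (((measurable_TT y1 y2).mul_const _).ceil)
  exact h1.comp h2

lemma cL_eq {q : (ℝ → ℝ) × (ℝ → ℝ)} (h1 : Continuous q.1) (y1 y2 : ℝ) :
    cL y1 y2 q = q.1 (TT y1 y2 q) :=
  Tendsto.limsup_eq ((h1.tendsto _).comp (tendsto_rapp _))

/-- The product-space event. -/
def A2 (y0 y1 y2 : ℝ) : Set (((ℝ → ℝ) × (ℝ → ℝ)) × (ℝ → ℝ)) :=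
  {z | z.1 ∈ NES y1 y2 ∧ 0 < TT y1 y2 z.1 ∧ ∀ n : ℕ, ∃ r : ℚ,
    TT y1 y2 z.1 ≤ (r : ℝ) ∧ (r : ℝ) < TT y1 y2 z.1 + 1 / (n + 1) ∧
    |z.2 r - (cL y1 y2 z.1 + y1 - y0)| < 1 / (n + 1)}

lemma measurableSet_A2 (y0 y1 y2 : ℝ) : MeasurableSet (A2 y0 y1 y2) := by
  have hTT : Measurable fun z : ((ℝ → ℝ) × (ℝ → ℝ)) × (ℝ → ℝ) => TT y1 y2 z.1 :=
    (measurable_TT y1 y2).comp measurable_fst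
  have hcL : Measurable fun z : ((ℝ → ℝ) × (ℝ → ℝ)) × (ℝ → ℝ) => cL y1 y2 z.1 :=
    (measurable_cL y1 y2).comp measurable_fst
  have hev : ∀ r : ℚ, Measurable fun z : ((ℝ → ℝ) × (ℝ → ℝ)) × (ℝ → ℝ) => z.2 (r : ℝ) :=
    fun r => (measurable_pi_apply ((r : ℚ) : ℝ)).comp measurable_snd
  have : A2 y0 y1 y2 = ((fun z : ((ℝ → ℝ) × (ℝ → ℝ)) × (ℝ → ℝ) => z.1) ⁻¹' NES y1 y2) ∩
      ({z | 0 < TT y1 y2 z.1} ∩ ⋂ n : ℕ, ⋃ r : ℚ,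
        ({z : ((ℝ → ℝ) × (ℝ → ℝ)) × (ℝ → ℝ) | TT y1 y2 z.1 ≤ (r : ℝ)} ∩
          ({z | (r : ℝ) < TT y1 y2 z.1 + 1 / (n + 1)} ∩
            {z | |z.2 r - (cL y1 y2 z.1 + y1 - y0)| < 1 / (n + 1)}))) := by
    ext z
    simp only [A2, mem_setOf_eq, mem_inter_iff, mem_preimage, mem_iInter, mem_iUnion]
  rw [this]
  refine ((measurableSet_NES y1 y2).preimage measurable_fst).inter
    ((measurableSet_lt measurable_const hTT).inter
      (MeasurableSet.iInter fun n => MeasurableSet.iUnion fun r => ?_))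
  refine (measurableSet_le hTT measurable_const).inter
    ((measurableSet_lt measurable_const (hTT.add_const _)).inter ?_)
  exact measurableSet_lt (((hev r).sub ((hcL.add_const y1).sub_const y0)).abs) measurable_const

end TripleCoalesceAux

open TripleCoalesceAux

/-- Three independent coalescing Brownian motions started at distinct points a.s. do not
all coalesce at the same time: the first meeting time of the first pair a.s. differs from
that of the last pair (on the event that both meetings occur). -/
theorem no_triple_simultaneous_coalescence
    {Ω : Type*} [MeasureSpace Ω] [IsProbabilityMeasure (ℙ : Measure Ω)]
    (B : Fin 3 → ℝ → Ω → ℝ) (hB : ∀ i, IsStandardBM (B i))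
    (hind : iIndepFun
      (fun (i : Fin 3) ω => fun t => B i t ω) (ℙ : Measure Ω))
    (x : Fin 3 → ℝ) (hx : Function.Injective x) :
    ℙ {ω | ({t : ℝ | 0 ≤ t ∧ x 0 + B 0 t ω = x 1 + B 1 t ω}).Nonempty ∧
           ({t : ℝ | 0 ≤ t ∧ x 1 + B 1 t ω = x 2 + B 2 t ω}).Nonempty ∧
           sInf {t : ℝ | 0 ≤ t ∧ x 0 + B 0 t ω = x 1 + B 1 t ω} =
             sInf {t : ℝ | 0 ≤ t ∧ x 1 + B 1 t ω = x 2 + B 2 t ω}} = 0 := by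
  classical
  have hm : ∀ i : Fin 3, Measurable fun ω => (fun t => B i t ω) := fun i =>
    measurable_pi_lambda _ fun t => (hB i).1 t
  -- independence of the pair (B 1, B 2) (as paths) from B 0 (as a path)
  have hIndep : IndepFun (fun ω => ((fun t => B 1 t ω), (fun t => B 2 t ω)))
      (fun ω => fun t => B 0 t ω) ℙ :=
    hind.indepFun_prodMk hm 1 2 0 (by decide) (by decide)
  have hψm : Measurable fun ω => ((fun t => B 1 t ω), (fun t => B 2 t ω)) :=
    (hm 1).prodMk (hm 2)
  have hpairm : Measurable
      (fun ω => (((fun t => B 1 t ω), (fun t => B 2 t ω)), (fun t => B 0 t ω))) :=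
    hψm.prodMk (hm 0)
  have hmap : (ℙ : Measure Ω).map (fun ω => (((fun t => B 1 t ω), (fun t => B 2 t ω)), fun t => B 0 t ω))
      = ((ℙ : Measure Ω).map fun ω => ((fun t => B 1 t ω), fun t => B 2 t ω)).prod
          ((ℙ : Measure Ω).map fun ω => fun t => B 0 t ω) :=
    (indepFun_iff_map_prod_eq_prod_map_map hψm.aemeasurable (hm 0).aemeasurable).mp hIndep
  -- the a.s. good set
  have hG : ℙ {ω | ¬ ∀ i : Fin 3, (B i 0 ω = 0 ∧ Continuous fun t => B i t ω)} = 0 := by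
    have h : ∀ᵐ ω ∂(ℙ : Measure Ω), ∀ i : Fin 3, (B i 0 ω = 0 ∧ Continuous fun t => B i t ω) :=
      ae_all_iff.mpr fun i => (hB i).2.1
    exact ae_iff.mp h
  -- single-time atoms of B 0 are null
  have hatom : ∀ t : ℝ, 0 < t → ∀ c : ℝ, ℙ {ω | B 0 t ω = c} = 0 := by
    intro t ht c
    have hι : Measurable fun ω => B 0 t ω - B 0 0 ω := ((hB 0).1 t).sub ((hB 0).1 0)
    have hsub : {ω | B 0 t ω = c} ⊆ ((fun ω => B 0 t ω - B 0 0 ω) ⁻¹' {c}) ∪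
        {ω | ¬ ∀ i : Fin 3, (B i 0 ω = 0 ∧ Continuous fun t => B i t ω)} := by
      intro ω hω
      by_cases hωG : ∀ i : Fin 3, (B i 0 ω = 0 ∧ Continuous fun t => B i t ω)
      · left
        simp only [mem_preimage, mem_singleton_iff]
        rw [(hωG 0).1, sub_zero]
        exact hω
      · right; exact hωG
    have h1 : ℙ ((fun ω => B 0 t ω - B 0 0 ω) ⁻¹' {c}) = 0 := by
      rw [← Measure.map_apply hι (measurableSet_singleton c), (hB 0).2.2.1 0 t le_rfl ht.le]
      have hv : (t - 0).toNNReal ≠ 0 := by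
        rw [sub_zero]
        exact (Real.toNNReal_pos.mpr ht).ne'
      exact gaussianReal_absolutelyContinuous 0 hv Real.volume_singleton
    refine le_antisymm ?_ zero_le
    calc ℙ {ω | B 0 t ω = c} ≤ ℙ (((fun ω => B 0 t ω - B 0 0 ω) ⁻¹' {c}) ∪
          {ω | ¬ ∀ i : Fin 3, (B i 0 ω = 0 ∧ Continuous fun t => B i t ω)}) :=
        measure_mono hsub
      _ ≤ ℙ ((fun ω => B 0 t ω - B 0 0 ω) ⁻¹' {c}) +
          ℙ {ω | ¬ ∀ i : Fin 3, (B i 0 ω = 0 ∧ Continuous fun t => B i t ω)} :=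
        measure_union_le _ _
      _ = 0 := by rw [h1, hG, add_zero]
  -- the inclusion of the event into the preimage of `A2` (up to the null bad set)
  have hsub : {ω | ({t : ℝ | 0 ≤ t ∧ x 0 + B 0 t ω = x 1 + B 1 t ω}).Nonempty ∧
           ({t : ℝ | 0 ≤ t ∧ x 1 + B 1 t ω = x 2 + B 2 t ω}).Nonempty ∧
           sInf {t : ℝ | 0 ≤ t ∧ x 0 + B 0 t ω = x 1 + B 1 t ω} =
             sInf {t : ℝ | 0 ≤ t ∧ x 1 + B 1 t ω = x 2 + B 2 t ω}} ⊆
      ((fun ω => (((fun t => B 1 t ω), (fun t => B 2 t ω)), (fun t => B 0 t ω))) ⁻¹'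
        A2 (x 0) (x 1) (x 2)) ∪
      {ω | ¬ ∀ i : Fin 3, (B i 0 ω = 0 ∧ Continuous fun t => B i t ω)} := by
    intro ω hω
    by_cases hωG : ∀ i : Fin 3, (B i 0 ω = 0 ∧ Continuous fun t => B i t ω)
    swap
    · right; exact hωG
    left
    obtain ⟨hne01, hne12, heq⟩ := hω
    have hc0 : Continuous fun t => B 0 t ω := (hωG 0).2
    have hc1 : Continuous fun t => B 1 t ω := (hωG 1).2
    have hc2 : Continuous fun t => B 2 t ω := (hωG 2).2
    have hseteq : {t : ℝ | 0 ≤ t ∧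
        dd (x 1) (x 2) ((fun t => B 1 t ω), (fun t => B 2 t ω)) t = 0} =
        {t : ℝ | 0 ≤ t ∧ x 1 + B 1 t ω = x 2 + B 2 t ω} := by
      ext t
      simp [dd, sub_eq_zero]
    have hne' : {t : ℝ | 0 ≤ t ∧
        dd (x 1) (x 2) ((fun t => B 1 t ω), (fun t => B 2 t ω)) t = 0}.Nonempty := by
      rw [hseteq]; exact hne12
    obtain ⟨hmemS, hNES, hTTeq⟩ := TT_spec hc1 hc2 hne'
    have hTval : TT (x 1) (x 2) ((fun t => B 1 t ω), (fun t => B 2 t ω)) =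
        sInf {t : ℝ | 0 ≤ t ∧ x 1 + B 1 t ω = x 2 + B 2 t ω} := by
      rw [hTTeq, hseteq]
    -- first meeting time of the 0-1 pair
    have hS01closed : IsClosed {t : ℝ | 0 ≤ t ∧ x 0 + B 0 t ω = x 1 + B 1 t ω} := by
      rw [setOf_and]
      exact (isClosed_le continuous_const continuous_id).inter
        (isClosed_eq (continuous_const.add hc0) (continuous_const.add hc1))
    have hS01mem : sInf {t : ℝ | 0 ≤ t ∧ x 0 + B 0 t ω = x 1 + B 1 t ω} ∈
        {t : ℝ | 0 ≤ t ∧ x 0 + B 0 t ω = x 1 + B 1 t ω} :=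
      hS01closed.csInf_mem hne01 ⟨0, fun t ht => ht.1⟩
    have hTS01 : sInf {t : ℝ | 0 ≤ t ∧ x 0 + B 0 t ω = x 1 + B 1 t ω} =
        TT (x 1) (x 2) ((fun t => B 1 t ω), (fun t => B 2 t ω)) := by
      rw [hTval]; exact heq
    rw [hTS01] at hS01mem
    have hT0 : 0 ≤ TT (x 1) (x 2) ((fun t => B 1 t ω), (fun t => B 2 t ω)) := by
      rw [hTTeq]
      exact hmemS.1
    have hTpos : 0 < TT (x 1) (x 2) ((fun t => B 1 t ω), (fun t => B 2 t ω)) := by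
      rcases hT0.lt_or_eq with h | h
      · exact h
      · exfalso
        have h0 : x 0 + B 0 0 ω = x 1 + B 1 0 ω := by
          have h2 := hS01mem.2
          rw [← h] at h2
          exact h2
        rw [(hωG 0).1, (hωG 1).1, add_zero, add_zero] at h0
        have := hx h0
        exact absurd this (by decide)
    have hcLval : cL (x 1) (x 2) ((fun t => B 1 t ω), (fun t => B 2 t ω)) =
        B 1 (TT (x 1) (x 2) ((fun t => B 1 t ω), (fun t => B 2 t ω))) ω := by
      rw [cL_eq hc1]
    have hval : B 0 (TT (x 1) (x 2) ((fun t => B 1 t ω), (fun t => B 2 t ω))) ω =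
        cL (x 1) (x 2) ((fun t => B 1 t ω), (fun t => B 2 t ω)) + x 1 - x 0 := by
      rw [hcLval]
      have := hS01mem.2
      linarith
    refine ⟨hNES, hTpos, ?_⟩
    intro n
    have hpos : (0:ℝ) < 1 / (n + 1) := by positivity
    obtain ⟨δ, hδ, hδ'⟩ := Metric.continuous_iff.mp hc0
      (TT (x 1) (x 2) ((fun t => B 1 t ω), (fun t => B 2 t ω))) (1 / (n + 1)) hpos
    obtain ⟨r, hr1, hr2⟩ := exists_rat_btwn
      (show TT (x 1) (x 2) ((fun t => B 1 t ω), (fun t => B 2 t ω)) <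
          TT (x 1) (x 2) ((fun t => B 1 t ω), (fun t => B 2 t ω)) + min δ (1 / (n + 1)) by
        have := lt_min hδ hpos; linarith)
    refine ⟨r, hr1.le, ?_, ?_⟩
    · have := min_le_right δ (1 / (n + 1)); linarith
    · have hdist : dist (r : ℝ) (TT (x 1) (x 2) ((fun t => B 1 t ω), (fun t => B 2 t ω))) < δ := by
        rw [Real.dist_eq, abs_lt]
        constructor
        · linarith
        · have := min_le_left δ (1 / (n + 1)); linarith
      have h8 := hδ' r hdist
      rw [Real.dist_eq] at h8
      rw [hval] at h8
      exact h8
  -- conclude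
  refine le_antisymm ?_ zero_le
  have hprob1 : IsProbabilityMeasure ((ℙ : Measure Ω).map fun ω => ((fun t => B 1 t ω), fun t => B 2 t ω)) :=
    Measure.isProbabilityMeasure_map hψm.aemeasurable
  have hprob2 : IsProbabilityMeasure ((ℙ : Measure Ω).map fun ω => fun t => B 0 t ω) :=
    Measure.isProbabilityMeasure_map (hm 0).aemeasurable
  have hzero : ∀ q : (ℝ → ℝ) × (ℝ → ℝ),
      ((ℙ : Measure Ω).map fun ω => fun t => B 0 t ω) (Prod.mk q ⁻¹' A2 (x 0) (x 1) (x 2)) = 0 := by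
    intro q
    by_cases hq : q ∈ NES (x 1) (x 2) ∧ 0 < TT (x 1) (x 2) q
    · have hsec : Prod.mk q ⁻¹' A2 (x 0) (x 1) (x 2) =
          {p : ℝ → ℝ | ∀ n : ℕ, ∃ r : ℚ,
            TT (x 1) (x 2) q ≤ (r : ℝ) ∧ (r : ℝ) < TT (x 1) (x 2) q + 1 / (n + 1) ∧
            |p r - (cL (x 1) (x 2) q + x 1 - x 0)| < 1 / (n + 1)} := by
        ext p
        constructor
        · rintro ⟨_, _, h⟩; exact h
        · intro h; exact ⟨hq.1, hq.2, h⟩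
      have hsecmeas : MeasurableSet {p : ℝ → ℝ | ∀ n : ℕ, ∃ r : ℚ,
            TT (x 1) (x 2) q ≤ (r : ℝ) ∧ (r : ℝ) < TT (x 1) (x 2) q + 1 / (n + 1) ∧
            |p r - (cL (x 1) (x 2) q + x 1 - x 0)| < 1 / (n + 1)} := by
        have : {p : ℝ → ℝ | ∀ n : ℕ, ∃ r : ℚ,
            TT (x 1) (x 2) q ≤ (r : ℝ) ∧ (r : ℝ) < TT (x 1) (x 2) q + 1 / (n + 1) ∧
            |p r - (cL (x 1) (x 2) q + x 1 - x 0)| < 1 / (n + 1)} =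
            ⋂ n : ℕ, ⋃ r : ℚ, ({p : ℝ → ℝ | TT (x 1) (x 2) q ≤ (r : ℝ)} ∩
              ({p | (r : ℝ) < TT (x 1) (x 2) q + 1 / (n + 1)} ∩
                {p | |p r - (cL (x 1) (x 2) q + x 1 - x 0)| < 1 / (n + 1)})) := by
          ext p
          simp only [mem_setOf_eq, mem_iInter, mem_iUnion, mem_inter_iff]
        rw [this]
        refine MeasurableSet.iInter fun n => MeasurableSet.iUnion fun r => ?_
        exact (MeasurableSet.const _).inter ((MeasurableSet.const _).inter
          (measurableSet_lt ((measurable_pi_apply _).sub_const _).abs measurable_const))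
      rw [hsec, Measure.map_apply (hm 0) hsecmeas]
      have hsub2 : ((fun ω => fun t => B 0 t ω) ⁻¹' {p : ℝ → ℝ | ∀ n : ℕ, ∃ r : ℚ,
            TT (x 1) (x 2) q ≤ (r : ℝ) ∧ (r : ℝ) < TT (x 1) (x 2) q + 1 / (n + 1) ∧
            |p r - (cL (x 1) (x 2) q + x 1 - x 0)| < 1 / (n + 1)}) ⊆
          {ω | B 0 (TT (x 1) (x 2) q) ω = cL (x 1) (x 2) q + x 1 - x 0} ∪
          {ω | ¬ ∀ i : Fin 3, (B i 0 ω = 0 ∧ Continuous fun t => B i t ω)} := by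
        intro ω hω
        by_cases hωG : ∀ i : Fin 3, (B i 0 ω = 0 ∧ Continuous fun t => B i t ω)
        swap
        · right; exact hωG
        left
        have hω' : ∀ n : ℕ, ∃ r : ℚ,
            TT (x 1) (x 2) q ≤ (r : ℝ) ∧ (r : ℝ) < TT (x 1) (x 2) q + 1 / (n + 1) ∧
            |B 0 r ω - (cL (x 1) (x 2) q + x 1 - x 0)| < 1 / (n + 1) := hω
        choose r hr1 hr2 hr3 using hω'
        have hrlim : Tendsto (fun n => (r n : ℝ)) atTop (𝓝 (TT (x 1) (x 2) q)) := by
          have hupper : Tendsto (fun n : ℕ => TT (x 1) (x 2) q + 1 / (n + 1)) atTop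
              (𝓝 (TT (x 1) (x 2) q)) := by
            simpa using (tendsto_const_nhds (x := TT (x 1) (x 2) q)).add tendsto_one_div_add_atTop_nhds_zero_nat
          exact tendsto_of_tendsto_of_tendsto_of_le_of_le tendsto_const_nhds hupper
            hr1 (fun n => (hr2 n).le)
        have h5 : Tendsto (fun n => B 0 (r n) ω) atTop (𝓝 (B 0 (TT (x 1) (x 2) q) ω)) :=
          (((hωG 0).2).tendsto _).comp hrlim
        have h6 : Tendsto (fun n => B 0 (r n) ω - (cL (x 1) (x 2) q + x 1 - x 0)) atTop
            (𝓝 0) :=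
          squeeze_zero_norm (fun n => (hr3 n).le) tendsto_one_div_add_atTop_nhds_zero_nat
        have h7 : Tendsto (fun n => B 0 (r n) ω) atTop
            (𝓝 (cL (x 1) (x 2) q + x 1 - x 0)) := by
          have := h6.add (tendsto_const_nhds (x := cL (x 1) (x 2) q + x 1 - x 0))
          simpa using this
        exact tendsto_nhds_unique h5 h7
      refine le_antisymm ?_ zero_le
      calc ℙ _ ≤ ℙ ({ω | B 0 (TT (x 1) (x 2) q) ω = cL (x 1) (x 2) q + x 1 - x 0} ∪
            {ω | ¬ ∀ i : Fin 3, (B i 0 ω = 0 ∧ Continuous fun t => B i t ω)}) :=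
          measure_mono hsub2
        _ ≤ ℙ {ω | B 0 (TT (x 1) (x 2) q) ω = cL (x 1) (x 2) q + x 1 - x 0} +
            ℙ {ω | ¬ ∀ i : Fin 3, (B i 0 ω = 0 ∧ Continuous fun t => B i t ω)} :=
          measure_union_le _ _
        _ = 0 := by rw [hatom _ hq.2 _, hG, add_zero]
    · have hempty : Prod.mk q ⁻¹' A2 (x 0) (x 1) (x 2) = ∅ := by
        ext p
        simp only [mem_preimage, mem_empty_iff_false, iff_false]
        rintro ⟨h1, h2, _⟩
        exact hq ⟨h1, h2⟩
      rw [hempty]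
      simp
  calc ℙ {ω | ({t : ℝ | 0 ≤ t ∧ x 0 + B 0 t ω = x 1 + B 1 t ω}).Nonempty ∧
           ({t : ℝ | 0 ≤ t ∧ x 1 + B 1 t ω = x 2 + B 2 t ω}).Nonempty ∧
           sInf {t : ℝ | 0 ≤ t ∧ x 0 + B 0 t ω = x 1 + B 1 t ω} =
             sInf {t : ℝ | 0 ≤ t ∧ x 1 + B 1 t ω = x 2 + B 2 t ω}}
      ≤ ℙ (((fun ω => (((fun t => B 1 t ω), (fun t => B 2 t ω)), (fun t => B 0 t ω))) ⁻¹'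
            A2 (x 0) (x 1) (x 2)) ∪
          {ω | ¬ ∀ i : Fin 3, (B i 0 ω = 0 ∧ Continuous fun t => B i t ω)}) :=
        measure_mono hsub
    _ ≤ ℙ ((fun ω => (((fun t => B 1 t ω), (fun t => B 2 t ω)), (fun t => B 0 t ω))) ⁻¹'
            A2 (x 0) (x 1) (x 2)) +
        ℙ {ω | ¬ ∀ i : Fin 3, (B i 0 ω = 0 ∧ Continuous fun t => B i t ω)} :=
      measure_union_le _ _
    _ = ℙ ((fun ω => (((fun t => B 1 t ω), (fun t => B 2 t ω)), (fun t => B 0 t ω))) ⁻¹'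
            A2 (x 0) (x 1) (x 2)) := by rw [hG, add_zero]
    _ = 0 := by
        rw [← Measure.map_apply hpairm (measurableSet_A2 _ _ _), hmap,
          Measure.prod_apply (measurableSet_A2 _ _ _)]
        calc ∫⁻ q, ((ℙ : Measure Ω).map fun ω => fun t => B 0 t ω) (Prod.mk q ⁻¹' A2 (x 0) (x 1) (x 2))
              ∂((ℙ : Measure Ω).map fun ω => ((fun t => B 1 t ω), fun t => B 2 t ω))
            = ∫⁻ _, 0 ∂((ℙ : Measure Ω).map fun ω => ((fun t => B 1 t ω), fun t => B 2 t ω)) :=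
              lintegral_congr hzero
          _ = 0 := lintegral_zero
end

section
/- For four independent Brownian motions started at four distinct points, forming two coalescing pairs, the probability that the coalescence time of the first pair equals the coalescence time of the second pair is zero. -/
open MeasureTheory ProbabilityTheory Filter Set

open scoped ENNReal Classical

noncomputable section

namespace NoSimCoal

/-- The zero set of `h` at times `≥ m`. -/
def ZS (h : ℝ → ℝ) (m : ℝ) : Set ℝ := {s : ℝ | m ≤ s ∧ h s = 0}

/-- Countable nonemptiness test, reading only rational values. -/
def NE (m : ℝ) : Set (ℚ → ℝ) :=
  {v | ∃ n : ℕ, ∀ k : ℕ, ∃ q : ℚ, m ≤ (q : ℝ) ∧ (q : ℝ) ≤ m + n + 1 ∧ |v q| < 1 / (k + 1)}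

lemma measurableSet_NE (m : ℝ) : MeasurableSet (NE m) := by
  have : NE m = ⋃ n : ℕ, ⋂ k : ℕ, ⋃ q : ℚ,
      ({_v : ℚ → ℝ | m ≤ (q : ℝ) ∧ (q : ℝ) ≤ m + n + 1} ∩ {v | |v q| < 1 / (k + 1)}) := by
    ext v; simp [NE, Set.mem_iInter, Set.mem_iUnion, and_assoc]
  rw [this]
  refine MeasurableSet.iUnion fun n => MeasurableSet.iInter fun k => MeasurableSet.iUnion fun q =>
    (MeasurableSet.const _).inter ?_
  exact measurableSet_lt ((measurable_pi_apply q).abs) measurable_const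

/-- Approximate first-zero functional at precision `k`, encoded in `ℝ≥0∞` relative to base
time `m₀`. -/
def Gk (m₀ m : ℝ) (k : ℕ) (v : ℚ → ℝ) : ℝ≥0∞ :=
  ⨅ q : ℚ, if m ≤ (q : ℝ) ∧ |v q| < 1 / (k + 1) then ENNReal.ofReal ((q : ℝ) - m₀) else ⊤

lemma measurable_Gk (m₀ m : ℝ) (k : ℕ) : Measurable (Gk m₀ m k) := by
  refine Measurable.iInf fun q => Measurable.ite ?_ measurable_const measurable_const
  exact (MeasurableSet.const _).inter
    (measurableSet_lt ((measurable_pi_apply q).abs) measurable_const)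

/-- First-zero time functional (relative to `m₀`), `⊤` if the countable test says "no zero". -/
def Ft (m₀ m : ℝ) (v : ℚ → ℝ) : ℝ≥0∞ :=
  if v ∈ NE m then ⨆ k : ℕ, Gk m₀ m k v else ⊤

lemma measurable_Ft (m₀ m : ℝ) : Measurable (Ft m₀ m) :=
  Measurable.ite (measurableSet_NE m) (Measurable.iSup fun k => measurable_Gk m₀ m k)
    measurable_const

lemma mem_NE_iff {h : ℝ → ℝ} (hc : Continuous h) (m : ℝ) :
    (fun q : ℚ => h q) ∈ NE m ↔ (ZS h m).Nonempty := by
  constructor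
  · rintro ⟨n, hn⟩
    have hmn : m ≤ m + n + 1 := by
      have : (0:ℝ) ≤ n := Nat.cast_nonneg n
      linarith
    obtain ⟨x₀, hx₀mem, hx₀min⟩ := isCompact_Icc.exists_isMinOn ⟨m, left_mem_Icc.2 hmn⟩
      ((continuous_abs.comp hc).continuousOn)
    refine ⟨x₀, hx₀mem.1, ?_⟩
    by_contra hne0
    have hpos : 0 < |h x₀| := abs_pos.2 hne0
    obtain ⟨k, hk⟩ := exists_nat_one_div_lt hpos
    obtain ⟨q, hq1, hq2, hq3⟩ := hn k
    have hle : |h x₀| ≤ |h (q:ℝ)| := hx₀min ⟨hq1, hq2⟩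
    have : (1:ℝ) / (k + 1) = 1 / ((k:ℝ) + 1) := by push_cast; ring
    rw [this] at hq3
    linarith
  · rintro ⟨s, hms, hs0⟩
    obtain ⟨n, hn⟩ := exists_nat_ge (s - m)
    refine ⟨n, fun k => ?_⟩
    have hk1 : (0:ℝ) < 1 / (k + 1) := by positivity
    obtain ⟨δ, hδ, hball⟩ := Metric.continuousAt_iff.mp hc.continuousAt _ hk1
    have hsn : s < min (s + δ) (m + n + 1) := lt_min (by linarith) (by linarith)
    obtain ⟨q, hq1, hq2⟩ := exists_rat_btwn hsn
    have hq2' := lt_min_iff.mp hq2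
    refine ⟨q, le_trans hms hq1.le, (hq2'.2).le, ?_⟩
    have hdist : dist (q:ℝ) s < δ := by
      rw [Real.dist_eq, abs_of_pos (by linarith [hq1])]
      linarith [hq2'.1]
    have := hball hdist
    rwa [Real.dist_eq, hs0, sub_zero] at this

lemma isClosed_ZS {h : ℝ → ℝ} (hc : Continuous h) (m : ℝ) : IsClosed (ZS h m) := by
  have : ZS h m = Ici m ∩ h ⁻¹' {0} := by ext s; simp [ZS, Set.mem_Ici]
  rw [this]
  exact isClosed_Ici.inter (isClosed_singleton.preimage hc)

lemma sInf_mem_ZS {h : ℝ → ℝ} (hc : Continuous h) {m : ℝ} (hne : (ZS h m).Nonempty) :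
    sInf (ZS h m) ∈ ZS h m :=
  (isClosed_ZS hc m).csInf_mem hne ⟨m, fun _ hs => hs.1⟩

lemma Ft_eq {h : ℝ → ℝ} (hc : Continuous h) {m₀ m : ℝ} (hne : (ZS h m).Nonempty) :
    Ft m₀ m (fun q : ℚ => h q) = ENNReal.ofReal (sInf (ZS h m) - m₀) := by
  set τ := sInf (ZS h m) with hτ
  have hτS : τ ∈ ZS h m := sInf_mem_ZS hc hne
  rw [Ft, if_pos ((mem_NE_iff hc m).mpr hne)]
  apply le_antisymm
  · -- each Gk is at most ofReal (τ - m₀)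
    refine iSup_le fun k => ?_
    refine ENNReal.le_of_forall_pos_le_add fun ε hε _ => ?_
    have hk1 : (0:ℝ) < 1 / (k + 1) := by positivity
    obtain ⟨δ, hδ, hball⟩ := Metric.continuousAt_iff.mp hc.continuousAt _ hk1
    have hlt : τ < τ + min δ ε := by
      have : (0:ℝ) < min δ ε := lt_min hδ (by exact_mod_cast hε)
      linarith
    obtain ⟨q, hq1, hq2⟩ := exists_rat_btwn hlt
    have hcond : m ≤ (q:ℝ) ∧ |h q| < 1 / (k + 1) := by
      refine ⟨le_trans hτS.1 hq1.le, ?_⟩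
      have hdist : dist (q:ℝ) τ < δ := by
        rw [Real.dist_eq, abs_of_pos (by linarith)]
        have := min_le_left δ (ε : ℝ)
        linarith
      have := hball hdist
      rwa [Real.dist_eq, hτS.2, sub_zero] at this
    calc Gk m₀ m k (fun q : ℚ => h q) ≤ ENNReal.ofReal ((q:ℝ) - m₀) := by
          refine iInf_le_of_le q ?_
          rw [if_pos hcond]
      _ ≤ ENNReal.ofReal ((τ - m₀) + ε) := by
          apply ENNReal.ofReal_le_ofReal
          have := min_le_right δ (ε : ℝ)
          linarith
      _ ≤ ENNReal.ofReal (τ - m₀) + ENNReal.ofReal ε := ENNReal.ofReal_add_le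
      _ = ENNReal.ofReal (τ - m₀) + ε := by rw [ENNReal.ofReal_coe_nnreal]
  · by_contra hlt
    push_neg at hlt
    set L := ⨆ k : ℕ, Gk m₀ m k (fun q : ℚ => h q) with hL
    have hLtop : L ≠ ⊤ := (hlt.trans_le le_top).ne
    have hLlt : L.toReal < τ - m₀ := by
      have := ENNReal.toReal_strict_mono ENNReal.ofReal_ne_top hlt
      rwa [ENNReal.toReal_ofReal_eq_iff.mpr ?_] at this
      · by_contra hneg
        push_neg at hneg
        rw [ENNReal.ofReal_of_nonpos hneg.le] at hlt
        exact (not_lt.2 (zero_le : (0:ℝ≥0∞) ≤ L)) hlt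
    set c := (L.toReal + (τ - m₀)) / 2 with hcdef
    have hc1 : L.toReal < c := by rw [hcdef]; linarith
    have hc2 : c < τ - m₀ := by rw [hcdef]; linarith
    have hc0 : 0 ≤ c := le_trans ENNReal.toReal_nonneg hc1.le
    have hLc : L < ENNReal.ofReal c := by
      conv_lhs => rw [← ENNReal.ofReal_toReal hLtop]
      exact ENNReal.ofReal_lt_ofReal_iff_of_nonneg ENNReal.toReal_nonneg |>.mpr hc1
    -- for each k, find approximate zero in [m, m₀ + c]
    have hq : ∀ k : ℕ, ∃ q : ℚ, m ≤ (q:ℝ) ∧ (q:ℝ) ≤ m₀ + c ∧ |h q| < 1 / (k + 1) := by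
      intro k
      have : Gk m₀ m k (fun q : ℚ => h q) < ENNReal.ofReal c :=
        lt_of_le_of_lt (le_iSup (fun k => Gk m₀ m k (fun q : ℚ => h q)) k) hLc
      rw [Gk, iInf_lt_iff] at this
      obtain ⟨q, hq⟩ := this
      by_cases hcond : m ≤ (q:ℝ) ∧ |h q| < 1 / (k + 1)
      · rw [if_pos hcond] at hq
        refine ⟨q, hcond.1, ?_, hcond.2⟩
        by_cases hqm : 0 ≤ (q:ℝ) - m₀
        · have := (ENNReal.ofReal_lt_ofReal_iff_of_nonneg hqm).mp hq
          linarith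
        · push_neg at hqm
          linarith
      · rw [if_neg hcond] at hq
        exact absurd hq (by simp)
    obtain ⟨q₀, hq₀⟩ := hq 0
    have hmIcc : m ≤ m₀ + c := le_trans hq₀.1 hq₀.2.1
    obtain ⟨x₀, hx₀mem, hx₀min⟩ := isCompact_Icc.exists_isMinOn ⟨m, left_mem_Icc.2 hmIcc⟩
      ((continuous_abs.comp hc).continuousOn)
    have hx₀0 : h x₀ = 0 := by
      by_contra hne0
      have hpos : 0 < |h x₀| := abs_pos.2 hne0
      obtain ⟨k, hk⟩ := exists_nat_one_div_lt hpos
      obtain ⟨q, hq1, hq2, hq3⟩ := hq k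
      have hle : |h x₀| ≤ |h (q:ℝ)| := hx₀min ⟨hq1, hq2⟩
      have : (1:ℝ) / (k + 1) = 1 / ((k:ℝ) + 1) := by push_cast; ring
      rw [this] at hq3
      linarith
    have : τ ≤ x₀ := csInf_le ⟨m, fun _ hs => hs.1⟩ ⟨hx₀mem.1, hx₀0⟩
    have : τ ≤ m₀ + c := le_trans this hx₀mem.2
    linarith

lemma Ft_ne_top_iff {h : ℝ → ℝ} (hc : Continuous h) (m₀ m : ℝ) :
    Ft m₀ m (fun q : ℚ => h q) ≠ ⊤ → (ZS h m).Nonempty := by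
  intro htop
  by_contra hne
  rw [Ft, if_neg] at htop
  · exact htop rfl
  · rw [mem_NE_iff hc m]; exact hne




/-- The law of `B a` for a standard BM is Gaussian with variance `a`. -/
lemma map_bm_eq_gaussian {Ω : Type*} [MeasureSpace Ω] {B : ℝ → Ω → ℝ}
    (hB : IsStandardBM B) {a : ℝ} (ha : 0 ≤ a) :
    Measure.map (fun ω => B a ω) ℙ = gaussianReal 0 (Real.toNNReal a) := by
  have h1 := hB.2.2.1 0 a le_rfl ha
  rw [sub_zero] at h1
  have h2 : (fun ω => B a ω - B 0 ω) =ᵐ[ℙ] fun ω => B a ω := by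
    filter_upwards [hB.2.1] with ω hω
    rw [hω.1, sub_zero]
  rw [← Measure.map_congr h2]
  exact h1

/-- Two independent BMs started from distinct space-time points are at distinct positions at any
fixed time `s` past both start times, almost surely. -/
lemma fixed_time_zero {Ω : Type*} [MeasureSpace Ω] [IsProbabilityMeasure (ℙ : Measure Ω)]
    {U V : ℝ → Ω → ℝ} (hU : IsStandardBM U) (hV : IsStandardBM V)
    (hUV : IndepFun (fun ω => fun s => U s ω) (fun ω => fun s => V s ω) (ℙ : Measure Ω))
    {xU xV tU tV : ℝ} (hne : (xU, tU) ≠ (xV, tV)) {s : ℝ} (hs : max tU tV ≤ s) :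
    ℙ {ω | xU + U (s - tU) ω = xV + V (s - tV) ω} = 0 := by
  have ha : 0 ≤ s - tU := by have := le_trans (le_max_left tU tV) hs; linarith
  have hb : 0 ≤ s - tV := by have := le_trans (le_max_right tU tV) hs; linarith
  set a := s - tU with hadef
  set b := s - tV with hbdef
  set X : Ω → ℝ := fun ω => U a ω with hXdef
  set Y : Ω → ℝ := fun ω => V b ω with hYdef
  have hXm : Measurable X := hU.1 a
  have hYm : Measurable Y := hV.1 b
  have hXY : IndepFun X Y ℙ := hUV.comp (measurable_pi_apply a) (measurable_pi_apply b)
  set D : Set (ℝ × ℝ) := (fun p : ℝ × ℝ => xU + p.1 - (xV + p.2)) ⁻¹' {0} with hDdef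
  have hDm : MeasurableSet D :=
    ((measurable_const.add measurable_fst).sub (measurable_const.add measurable_snd))
      (measurableSet_singleton 0)
  have hEv : {ω | xU + U (s - tU) ω = xV + V (s - tV) ω}
      = (fun ω => (X ω, Y ω)) ⁻¹' D := by
    ext ω; simp [hDdef, Set.mem_preimage, sub_eq_zero, hXdef, hYdef, hadef, hbdef]
  rw [hEv, ← Measure.map_apply (hXm.prodMk hYm) hDm,
    (indepFun_iff_map_prod_eq_prod_map_map hXm.aemeasurable hYm.aemeasurable).mp hXY]
  haveI : IsProbabilityMeasure (Measure.map X ℙ) := Measure.isProbabilityMeasure_map hXm.aemeasurable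
  haveI : IsProbabilityMeasure (Measure.map Y ℙ) := Measure.isProbabilityMeasure_map hYm.aemeasurable
  rcases ha.lt_or_eq with hapos | ha0
  · -- integrate over Y, slices in law of X, which is atomless
    rw [Measure.prod_apply_symm hDm]
    have hslice : ∀ y : ℝ, ((fun x => (x, y)) ⁻¹' D) = {xV + y - xU} := by
      intro y; ext u
      simp only [hDdef, Set.mem_preimage, Set.mem_singleton_iff, Set.mem_singleton_iff]
      constructor <;> intro h' <;> linarith
    have hzero : ∀ y : ℝ, (Measure.map X ℙ) ((fun x => (x, y)) ⁻¹' D) = 0 := by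
      intro y
      rw [hslice y, map_bm_eq_gaussian hU ha]
      exact gaussianReal_absolutelyContinuous 0 (Real.toNNReal_pos.mpr hapos).ne'
        Real.volume_singleton
    simp [hzero]
  · rcases hb.lt_or_eq with hbpos | hb0
    · rw [Measure.prod_apply hDm]
      have hslice : ∀ u : ℝ, (Prod.mk u ⁻¹' D) = {xU + u - xV} := by
        intro u; ext v
        simp only [hDdef, Set.mem_preimage, Set.mem_singleton_iff]
        constructor <;> intro h' <;> linarith
      have hzero : ∀ u : ℝ, (Measure.map Y ℙ) (Prod.mk u ⁻¹' D) = 0 := by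
        intro u
        rw [hslice u, map_bm_eq_gaussian hV hb]
        exact gaussianReal_absolutelyContinuous 0 (Real.toNNReal_pos.mpr hbpos).ne'
          Real.volume_singleton
      simp [hzero]
    · -- both times are the start times: distinct starting points
      have htUV : tU = tV := by rw [hadef] at ha0; rw [hbdef] at hb0; linarith
      have hxUV : xU ≠ xV := fun hxx => hne (by rw [hxx, htUV])
      rw [map_bm_eq_gaussian hU ha, map_bm_eq_gaussian hV hb, ← ha0, ← hb0]
      simp only [Real.toNNReal_zero, gaussianReal_zero_var, Measure.dirac_prod_dirac]
      rw [Measure.dirac_apply' _ hDm]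
      have : (0, 0) ∉ D := by
        simp only [hDdef, Set.mem_preimage, Set.mem_singleton_iff]
        intro h'
        exact hxUV (by linarith)
      simp only [Set.indicator_apply, Prod.mk_zero_zero] at *
      simp [this]

end NoSimCoal

end

/-- Four independent Brownian motions from distinct space-time starting points, forming
two coalescing pairs: the probability that the two pairwise first-meeting times are equal
(and finite, i.e. both meetings occur) is zero. Path `i` starts at position `x i` at
time `t i` and is given by `x i + W i (s - t i)` for `s ≥ t i`. -/
theorem no_simultaneous_coalescence_of_two_pairs
    {Ω : Type*} [MeasureSpace Ω] [IsProbabilityMeasure (ℙ : Measure Ω)]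
    (W : Fin 4 → ℝ → Ω → ℝ) (hW : ∀ i, IsStandardBM (W i))
    (hind : iIndepFun
      (fun i ω => fun t => W i t ω) (ℙ : Measure Ω))
    (x t : Fin 4 → ℝ) (hx : Function.Injective (fun i => (x i, t i))) :
    ℙ {ω | ({s : ℝ | max (t 0) (t 1) ≤ s ∧
              x 0 + W 0 (s - t 0) ω = x 1 + W 1 (s - t 1) ω}).Nonempty ∧
           ({s : ℝ | max (t 2) (t 3) ≤ s ∧
              x 2 + W 2 (s - t 2) ω = x 3 + W 3 (s - t 3) ω}).Nonempty ∧
           sInf {s : ℝ | max (t 0) (t 1) ≤ s ∧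
              x 0 + W 0 (s - t 0) ω = x 1 + W 1 (s - t 1) ω} =
             sInf {s : ℝ | max (t 2) (t 3) ≤ s ∧
              x 2 + W 2 (s - t 2) ω = x 3 + W 3 (s - t 3) ω}} = 0 := by
  classical
  set m₁ := max (t 0) (t 1) with hm₁
  set m₂ := max (t 2) (t 3) with hm₂
  set m₀ := min m₁ m₂ with hm₀
  have hm₀₁ : m₀ ≤ m₁ := min_le_left _ _
  have hm₀₂ : m₀ ≤ m₂ := min_le_right _ _
  set d : Ω → ℚ → ℝ :=
    fun ω q => x 0 + W 0 ((q : ℝ) - t 0) ω - (x 1 + W 1 ((q : ℝ) - t 1) ω) with hd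
  set e : Ω → ℚ → ℝ :=
    fun ω q => x 2 + W 2 ((q : ℝ) - t 2) ω - (x 3 + W 3 ((q : ℝ) - t 3) ω) with he
  set Z₁ : Ω → ℝ≥0∞ := fun ω => NoSimCoal.Ft m₀ m₁ (d ω) with hZ₁
  set Z₂ : Ω → ℝ≥0∞ := fun ω => NoSimCoal.Ft m₀ m₂ (e ω) with hZ₂
  have hdm : Measurable d := measurable_pi_lambda _ fun q =>
    (measurable_const.add ((hW 0).1 _)).sub (measurable_const.add ((hW 1).1 _))
  have hem : Measurable e := measurable_pi_lambda _ fun q =>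
    (measurable_const.add ((hW 2).1 _)).sub (measurable_const.add ((hW 3).1 _))
  have hZ₁m : Measurable Z₁ := (NoSimCoal.measurable_Ft _ _).comp hdm
  have hZ₂m : Measurable Z₂ := (NoSimCoal.measurable_Ft _ _).comp hem
  have hpathm : ∀ i, Measurable (fun ω => fun s => W i s ω) := fun i =>
    measurable_pi_lambda _ fun s => (hW i).1 s
  have hpair := hind.indepFun_prodMk_prodMk hpathm 0 1 2 3
    (by decide) (by decide) (by decide) (by decide)
  have hφ₁ : Measurable (fun p : (ℝ → ℝ) × (ℝ → ℝ) => fun q : ℚ =>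
      x 0 + p.1 ((q : ℝ) - t 0) - (x 1 + p.2 ((q : ℝ) - t 1))) :=
    measurable_pi_lambda _ fun q =>
      (measurable_const.add ((measurable_pi_apply _).comp measurable_fst)).sub
        (measurable_const.add ((measurable_pi_apply _).comp measurable_snd))
  have hφ₂ : Measurable (fun p : (ℝ → ℝ) × (ℝ → ℝ) => fun q : ℚ =>
      x 2 + p.1 ((q : ℝ) - t 2) - (x 3 + p.2 ((q : ℝ) - t 3))) :=
    measurable_pi_lambda _ fun q =>
      (measurable_const.add ((measurable_pi_apply _).comp measurable_fst)).sub
        (measurable_const.add ((measurable_pi_apply _).comp measurable_snd))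
  have hde : IndepFun d e (ℙ : Measure Ω) := hpair.comp hφ₁ hφ₂
  have hZind : IndepFun Z₁ Z₂ (ℙ : Measure Ω) :=
    hde.comp (NoSimCoal.measurable_Ft m₀ m₁) (NoSimCoal.measurable_Ft m₀ m₂)
  have hP : ∀ᵐ ω ∂(ℙ : Measure Ω), ∀ i, W i 0 ω = 0 ∧ Continuous fun s => W i s ω :=
    ae_all_iff.2 fun i => (hW i).2.1
  have hcont1 : ∀ ω : Ω, (∀ i, W i 0 ω = 0 ∧ Continuous fun s => W i s ω) →
      Continuous (fun s : ℝ => x 0 + W 0 (s - t 0) ω - (x 1 + W 1 (s - t 1) ω)) := fun ω hω =>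
    (continuous_const.add ((hω 0).2.comp (continuous_id.sub continuous_const))).sub
      (continuous_const.add ((hω 1).2.comp (continuous_id.sub continuous_const)))
  have hcont2 : ∀ ω : Ω, (∀ i, W i 0 ω = 0 ∧ Continuous fun s => W i s ω) →
      Continuous (fun s : ℝ => x 2 + W 2 (s - t 2) ω - (x 3 + W 3 (s - t 3) ω)) := fun ω hω =>
    (continuous_const.add ((hω 2).2.comp (continuous_id.sub continuous_const))).sub
      (continuous_const.add ((hω 3).2.comp (continuous_id.sub continuous_const)))
  -- the law of Z₂ has no finite atoms
  have hde23 : IndepFun (fun ω => fun s => W 2 s ω) (fun ω => fun s => W 3 s ω) (ℙ : Measure Ω) :=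
    hind.indepFun (show (2 : Fin 4) ≠ 3 by decide)
  have hne23 : ((x 2 : ℝ), (t 2 : ℝ)) ≠ (x 3, t 3) := fun h =>
    absurd (hx h) (by decide)
  have hsing : ∀ u : ℝ≥0∞, u ≠ ⊤ → Measure.map Z₂ (ℙ : Measure Ω) {u} = 0 := by
    intro u hu
    rw [Measure.map_apply hZ₂m (measurableSet_singleton u)]
    set su := m₀ + u.toReal with hsu
    have hreduce : ℙ {ω | m₂ ≤ su ∧ x 2 + W 2 (su - t 2) ω = x 3 + W 3 (su - t 3) ω} = 0 := by
      by_cases hcase : m₂ ≤ su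
      · have hss : {ω | m₂ ≤ su ∧ x 2 + W 2 (su - t 2) ω = x 3 + W 3 (su - t 3) ω}
            = {ω | x 2 + W 2 (su - t 2) ω = x 3 + W 3 (su - t 3) ω} := by
          ext ω; simp [hcase]
        rw [hss]
        exact NoSimCoal.fixed_time_zero (hW 2) (hW 3) hde23 hne23 hcase
      · have hss : {ω | m₂ ≤ su ∧ x 2 + W 2 (su - t 2) ω = x 3 + W 3 (su - t 3) ω} = ∅ := by
          ext ω; simp [hcase]
        rw [hss]; simp
    have hsub : Z₂ ⁻¹' {u} ⊆
        {ω | m₂ ≤ su ∧ x 2 + W 2 (su - t 2) ω = x 3 + W 3 (su - t 3) ω} ∪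
        {ω | ¬ ∀ i, W i 0 ω = 0 ∧ Continuous fun s => W i s ω} := by
      intro ω hω
      by_cases hPω : ∀ i, W i 0 ω = 0 ∧ Continuous fun s => W i s ω
      · left
        have hc := hcont2 ω hPω
        have hZω : Z₂ ω = u := hω
        have htop : NoSimCoal.Ft m₀ m₂
            (fun q : ℚ => x 2 + W 2 ((q : ℝ) - t 2) ω - (x 3 + W 3 ((q : ℝ) - t 3) ω)) ≠ ⊤ := by
          show Z₂ ω ≠ ⊤; rw [hZω]; exact hu
        have hneS := NoSimCoal.Ft_ne_top_iff hc m₀ m₂ htop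
        have hFt := NoSimCoal.Ft_eq hc (m₀ := m₀) hneS
        obtain ⟨hτ1, hτ2⟩ := NoSimCoal.sInf_mem_ZS hc hneS
        set τ := sInf (NoSimCoal.ZS
          (fun s : ℝ => x 2 + W 2 (s - t 2) ω - (x 3 + W 3 (s - t 3) ω)) m₂) with hτdef
        have hZω' : Z₂ ω = ENNReal.ofReal (τ - m₀) := hFt
        have hτm : m₀ ≤ τ := le_trans hm₀₂ hτ1
        have hutoReal : u.toReal = τ - m₀ := by
          rw [← hZω, hZω', ENNReal.toReal_ofReal (by linarith)]
        have hsuτ : su = τ := by rw [hsu, hutoReal]; ring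
        refine ⟨by rw [hsuτ]; exact hτ1, ?_⟩
        rw [hsuτ]
        exact sub_eq_zero.mp hτ2
      · right; exact hPω
    refine le_antisymm ?_ zero_le
    calc ℙ (Z₂ ⁻¹' {u}) ≤ ℙ ({ω | m₂ ≤ su ∧ x 2 + W 2 (su - t 2) ω = x 3 + W 3 (su - t 3) ω} ∪
        {ω | ¬ ∀ i, W i 0 ω = 0 ∧ Continuous fun s => W i s ω}) := measure_mono hsub
      _ ≤ ℙ {ω | m₂ ≤ su ∧ x 2 + W 2 (su - t 2) ω = x 3 + W 3 (su - t 3) ω} +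
          ℙ {ω | ¬ ∀ i, W i 0 ω = 0 ∧ Continuous fun s => W i s ω} := measure_union_le _ _
      _ = 0 := by rw [hreduce, ae_iff.mp hP, add_zero]
  -- the diagonal event for (Z₁, Z₂) is null
  have hDm : MeasurableSet {p : ℝ≥0∞ × ℝ≥0∞ | p.1 ≠ ⊤ ∧ p.1 = p.2} :=
    (((measurableSet_singleton (⊤ : ℝ≥0∞)).compl).preimage measurable_fst).inter
      (measurableSet_eq_fun measurable_fst measurable_snd)
  haveI : IsProbabilityMeasure (Measure.map Z₁ (ℙ : Measure Ω)) :=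
    Measure.isProbabilityMeasure_map hZ₁m.aemeasurable
  haveI : IsProbabilityMeasure (Measure.map Z₂ (ℙ : Measure Ω)) :=
    Measure.isProbabilityMeasure_map hZ₂m.aemeasurable
  have hE' : ℙ {ω | Z₁ ω ≠ ⊤ ∧ Z₁ ω = Z₂ ω} = 0 := by
    have hpre : {ω | Z₁ ω ≠ ⊤ ∧ Z₁ ω = Z₂ ω} =
        (fun ω => (Z₁ ω, Z₂ ω)) ⁻¹' {p : ℝ≥0∞ × ℝ≥0∞ | p.1 ≠ ⊤ ∧ p.1 = p.2} := rfl
    rw [hpre, ← Measure.map_apply (hZ₁m.prodMk hZ₂m) hDm,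
      (indepFun_iff_map_prod_eq_prod_map_map hZ₁m.aemeasurable hZ₂m.aemeasurable).mp hZind,
      Measure.prod_apply hDm]
    have hz : ∀ z : ℝ≥0∞,
        (Measure.map Z₂ (ℙ : Measure Ω))
          (Prod.mk z ⁻¹' {p : ℝ≥0∞ × ℝ≥0∞ | p.1 ≠ ⊤ ∧ p.1 = p.2}) = 0 := by
      intro z
      by_cases hz : z = ⊤
      · have : Prod.mk z ⁻¹' {p : ℝ≥0∞ × ℝ≥0∞ | p.1 ≠ ⊤ ∧ p.1 = p.2} = ∅ := by
          ext y; simp [hz]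
        rw [this]; simp
      · refine measure_mono_null (fun y hy => ?_) (hsing z hz)
        simp only [Set.mem_preimage, Set.mem_setOf_eq] at hy
        simp [Set.mem_singleton_iff, ← hy.2]
    have hz' : ∀ z : ℝ≥0∞, (Measure.map Z₂ (ℙ : Measure Ω)) {a : ℝ≥0∞ | ¬z = ⊤ ∧ z = a} = 0 :=
      fun z => hz z
    simp [hz']
  -- conclude
  have hsubT : {ω | ({s : ℝ | m₁ ≤ s ∧
              x 0 + W 0 (s - t 0) ω = x 1 + W 1 (s - t 1) ω}).Nonempty ∧
           ({s : ℝ | m₂ ≤ s ∧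
              x 2 + W 2 (s - t 2) ω = x 3 + W 3 (s - t 3) ω}).Nonempty ∧
           sInf {s : ℝ | m₁ ≤ s ∧
              x 0 + W 0 (s - t 0) ω = x 1 + W 1 (s - t 1) ω} =
             sInf {s : ℝ | m₂ ≤ s ∧
              x 2 + W 2 (s - t 2) ω = x 3 + W 3 (s - t 3) ω}} ⊆
      {ω | Z₁ ω ≠ ⊤ ∧ Z₁ ω = Z₂ ω} ∪
      {ω | ¬ ∀ i, W i 0 ω = 0 ∧ Continuous fun s => W i s ω} := by
    intro ω hω
    by_cases hPω : ∀ i, W i 0 ω = 0 ∧ Continuous fun s => W i s ω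
    · left
      obtain ⟨hne1, hne2, hinf⟩ := hω
      have hc1 := hcont1 ω hPω
      have hc2 := hcont2 ω hPω
      have hset1 : {s : ℝ | m₁ ≤ s ∧ x 0 + W 0 (s - t 0) ω = x 1 + W 1 (s - t 1) ω}
          = NoSimCoal.ZS (fun s : ℝ => x 0 + W 0 (s - t 0) ω - (x 1 + W 1 (s - t 1) ω)) m₁ := by
        ext s; simp [NoSimCoal.ZS, sub_eq_zero]
      have hset2 : {s : ℝ | m₂ ≤ s ∧ x 2 + W 2 (s - t 2) ω = x 3 + W 3 (s - t 3) ω}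
          = NoSimCoal.ZS (fun s : ℝ => x 2 + W 2 (s - t 2) ω - (x 3 + W 3 (s - t 3) ω)) m₂ := by
        ext s; simp [NoSimCoal.ZS, sub_eq_zero]
      rw [hset1] at hne1 hinf
      rw [hset2] at hne2 hinf
      have hF1 : Z₁ ω = ENNReal.ofReal (sInf (NoSimCoal.ZS
          (fun s : ℝ => x 0 + W 0 (s - t 0) ω - (x 1 + W 1 (s - t 1) ω)) m₁) - m₀) :=
        NoSimCoal.Ft_eq hc1 (m₀ := m₀) hne1
      have hF2 : Z₂ ω = ENNReal.ofReal (sInf (NoSimCoal.ZS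
          (fun s : ℝ => x 2 + W 2 (s - t 2) ω - (x 3 + W 3 (s - t 3) ω)) m₂) - m₀) :=
        NoSimCoal.Ft_eq hc2 (m₀ := m₀) hne2
      refine ⟨by rw [hF1]; exact ENNReal.ofReal_ne_top, ?_⟩
      rw [hF1, hF2, hinf]
    · right; exact hPω
  refine le_antisymm ?_ zero_le
  calc ℙ _ ≤ ℙ ({ω | Z₁ ω ≠ ⊤ ∧ Z₁ ω = Z₂ ω} ∪
      {ω | ¬ ∀ i, W i 0 ω = 0 ∧ Continuous fun s => W i s ω}) := measure_mono hsubT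
    _ ≤ ℙ {ω | Z₁ ω ≠ ⊤ ∧ Z₁ ω = Z₂ ω} +
        ℙ {ω | ¬ ∀ i, W i 0 ω = 0 ∧ Continuous fun s => W i s ω} := measure_union_le _ _
    _ = 0 := by rw [hE', ae_iff.mp hP, add_zero]
end
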